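/- Let X be a real reflexive Banach space and Y a real Banach space, both of dimension at least 2. Suppose K(X,Y), the space of compact linear operators from X to Y, is an M-ideal in L(X,Y), the space of bounded linear operators from X to Y. Let T ∈ L(X,Y) be such that (i) M_T = {x₀, −x₀} for some x₀ ∈ X with ‖x₀‖ = 1, (ii) Tx₀ is a smooth point of Y, and (iii) dist(T, K(X,Y)) < ‖T‖. Then T is a smooth point of L(X,Y). -/

import Mathlib

/-!
Let `ψ := g ∘ ev_{x₀}`, which norms `T`. For a norming functional `f` of `T` and any operator
`C`, `t f(C) ≤ ‖T + tC‖ - ‖T‖` for `t > 0`. Choosing evaluation functionals `h_t ∘ ev_{x_t}`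
that nearly norm `T + tC` and passing to weak-* limits along `t → 0⁺` (reflexivity of `X`,
Banach–Alaoglu in `Y*` and in `L(X,Y)*`) yields `F` norming `T` with `f C ≤ F C` and
`F K = h (K x)` for compact `K`, since compact operators turn weak into norm convergence.
As `dist(T, K(X,Y)) < ‖T‖`, the L-projection kills every norming functional of `T`, and the
functionals it kills are determined, with their norm, by their restriction to `K(X,Y)`; hence
`F = h ∘ ev_x`. Then `x` attains the norm of `T`, so `x = ±x₀`, and smoothness of `T x₀` gives
`F = ψ`. Thus `f ≤ ψ` pointwise, i.e. `f = ψ`.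
-/

open NormedSpace Filter Topology

theorem StrongDual.apply_le_norm_mul_norm {E : Type*} [SeminormedAddCommGroup E] [NormedSpace ℝ E]
    (f : StrongDual ℝ E) (v : E) : f v ≤ ‖f‖ * ‖v‖ :=
  (Real.le_norm_self _).trans (f.le_opNorm v)

theorem StrongDual.apply_le_norm {E : Type*} [SeminormedAddCommGroup E] [NormedSpace ℝ E]
    {f : StrongDual ℝ E} (hf : ‖f‖ ≤ 1) (v : E) : f v ≤ ‖v‖ :=
  (f.apply_le_norm_mul_norm v).trans (mul_le_of_le_one_left (norm_nonneg v) hf)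

theorem StrongDual.norm_eq_one_of_apply_eq_norm {E : Type*} [SeminormedAddCommGroup E]
    [NormedSpace ℝ E] {f : StrongDual ℝ E} (hf : ‖f‖ ≤ 1) {v : E} (hv : ‖v‖ ≠ 0)
    (hfv : f v = ‖v‖) : ‖f‖ = 1 := by
  have := f.apply_le_norm_mul_norm v
  rw [hfv] at this
  exact hf.antisymm (le_of_mul_le_mul_right (by linarith) ((norm_nonneg v).lt_of_ne' hv))

/-- `J` is an M-ideal, witnessed by the L-projection `P` of the dual onto the annihilator of `J`. -/
structure IsMIdealProjection {Z : Type*} [NormedAddCommGroup Z] [NormedSpace ℝ Z]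
    (J : Submodule ℝ Z) (P : StrongDual ℝ Z →L[ℝ] StrongDual ℝ Z) : Prop where
  idem : ∀ f, P (P f) = P f
  norm_eq : ∀ f, ‖f‖ = ‖P f‖ + ‖f - P f‖
  range_eq : Set.range P = {f | ∀ z ∈ J, f z = 0}

namespace IsMIdealProjection

variable {Z : Type*} [NormedAddCommGroup Z] [NormedSpace ℝ Z] {J : Submodule ℝ Z}
  {P : StrongDual ℝ Z →L[ℝ] StrongDual ℝ Z}

theorem map_apply_eq_zero (hP : IsMIdealProjection J P) (f : StrongDual ℝ Z) {z : Z}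
    (hz : z ∈ J) : P f z = 0 := by
  have hf : P f ∈ Set.range P := ⟨f, rfl⟩
  rw [hP.range_eq] at hf
  exact hf z hz

theorem map_eq_self (hP : IsMIdealProjection J P) {f : StrongDual ℝ Z}
    (hf : ∀ z ∈ J, f z = 0) : P f = f := by
  obtain ⟨g, rfl⟩ : f ∈ Set.range P := hP.range_eq ▸ hf
  exact hP.idem g

theorem map_eq_zero_of_norm_le (hP : IsMIdealProjection J P) {f : StrongDual ℝ Z}
    (hf : ‖f‖ ≤ ‖f.comp J.subtypeL‖) : P f = 0 := by
  have hrestrict : f.comp J.subtypeL = (f - P f).comp J.subtypeL := by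
    ext z
    simp [hP.map_apply_eq_zero f z.2]
  have hle : ‖f‖ ≤ ‖f - P f‖ :=
    calc ‖f‖ ≤ ‖(f - P f).comp J.subtypeL‖ := hrestrict ▸ hf
      _ ≤ ‖f - P f‖ * ‖J.subtypeL‖ := (f - P f).opNorm_comp_le _
      _ ≤ ‖f - P f‖ := mul_le_of_le_one_right (norm_nonneg _) (Submodule.norm_subtypeL_le J)
  have := hP.norm_eq f
  exact norm_le_zero_iff.mp (by linarith)

/-- A Hahn–Banach extension `g` of `f|J` satisfies `f = g - P g`. -/
theorem norm_comp_subtypeL_eq (hP : IsMIdealProjection J P) {f : StrongDual ℝ Z}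
    (hf : P f = 0) : ‖f.comp J.subtypeL‖ = ‖f‖ := by
  obtain ⟨g, hgf, hg⟩ := exists_extension_norm_eq J (f.comp J.subtypeL)
  have hfg : P (f - g) = f - g := hP.map_eq_self fun z hz => by
    simp [hgf ⟨z, hz⟩]
  have hf_eq : f = g - P g := by
    rw [map_sub, hf, zero_sub] at hfg
    rw [← sub_add_cancel f g, ← hfg]
    abel
  refine le_antisymm ?_ ?_
  · calc ‖f.comp J.subtypeL‖ ≤ ‖f‖ * ‖J.subtypeL‖ := f.opNorm_comp_le _
      _ ≤ ‖f‖ := mul_le_of_le_one_right (norm_nonneg _) (Submodule.norm_subtypeL_le J)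
  · have := hP.norm_eq g
    rw [← hg, hf_eq]
    linarith [norm_nonneg (P g)]

theorem eq_of_eqOn (hP : IsMIdealProjection J P) {f₁ f₂ : StrongDual ℝ Z} (h₁ : P f₁ = 0)
    (h₂ : P f₂ = 0) (h : ∀ z ∈ J, f₁ z = f₂ z) : f₁ = f₂ := by
  have hsub : P (f₁ - f₂) = f₁ - f₂ := hP.map_eq_self fun z hz => by simp [h z hz]
  rw [map_sub, h₁, h₂, sub_zero, eq_comm, sub_eq_zero] at hsub
  exact hsub

theorem eq_of_eqOn_of_norm_le (hP : IsMIdealProjection J P) {F φ : StrongDual ℝ Z}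
    (hF : P F = 0) (h : ∀ z ∈ J, F z = φ z) (hφ : ‖φ‖ ≤ ‖F‖) : F = φ := by
  have hrestrict : F.comp J.subtypeL = φ.comp J.subtypeL := by
    ext z
    exact h z z.2
  refine hP.eq_of_eqOn hF (hP.map_eq_zero_of_norm_le ?_) h
  rwa [← hrestrict, hP.norm_comp_subtypeL_eq hF]

/-- If `P f ≠ 0`, splitting `f = P f + (f - P f)` gives `‖T‖ ≤ ‖T - K‖` for every `K ∈ J`. -/
theorem map_eq_zero_of_apply_eq_norm (hP : IsMIdealProjection J P) {T : Z}
    (hT : Metric.infDist T J < ‖T‖) {f : StrongDual ℝ Z} (hf : ‖f‖ ≤ 1) (hfT : f T = ‖T‖) :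
    P f = 0 := by
  by_contra hPf
  have hpos : 0 < ‖P f‖ := norm_pos_iff.mpr hPf
  refine hT.not_ge ((Metric.le_infDist ⟨0, J.zero_mem⟩).mpr fun K hK => ?_)
  have hsplit : f T = P f (T - K) + (f - P f) T := by
    simp [hP.map_apply_eq_zero f hK]
  have h₁ := (P f).apply_le_norm_mul_norm (T - K)
  have h₂ := (f - P f).apply_le_norm_mul_norm T
  have h₃ := hP.norm_eq f
  rw [dist_eq_norm]
  refine le_of_mul_le_mul_left ?_ hpos
  nlinarith [norm_nonneg T]

end IsMIdealProjection

section WeakLimits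

variable {α : Type*}

theorem exists_forall_tendsto_apply_of_norm_le {E : Type*} [SeminormedAddCommGroup E]
    [NormedSpace ℝ E] (U : Ultrafilter α) {φ : α → StrongDual ℝ E} {r : ℝ}
    (hφ : ∀ a, ‖φ a‖ ≤ r) :
    ∃ ψ : StrongDual ℝ E, ‖ψ‖ ≤ r ∧ ∀ v, Tendsto (fun a => φ a v) U (𝓝 (ψ v)) := by
  have hball : IsCompact (WeakDual.toStrongDual ⁻¹' Metric.closedBall (0 : StrongDual ℝ E) r) :=
    WeakDual.isCompact_closedBall 0 r
  obtain ⟨ψ, hψr, hψ⟩ := hball.ultrafilter_le_nhds (U.map (StrongDual.toWeakDual ∘ φ))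
    (le_principal_iff.mpr (Ultrafilter.mem_map.mpr (univ_mem' fun a => by simpa using hφ a)))
  refine ⟨WeakDual.toStrongDual ψ, by simpa using hψr, fun v => ?_⟩
  exact ((WeakDual.eval_continuous v).tendsto ψ).comp hψ

theorem exists_forall_tendsto_dual_apply {X : Type*} [NormedAddCommGroup X] [NormedSpace ℝ X]
    (hrefl : Function.Surjective (inclusionInDoubleDual ℝ X)) (U : Ultrafilter α)
    {x : α → X} {r : ℝ} (hx : ∀ a, ‖x a‖ ≤ r) :
    ∃ x' : X, ‖x'‖ ≤ r ∧ ∀ φ : StrongDual ℝ X, Tendsto (fun a => φ (x a)) U (𝓝 (φ x')) := by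
  obtain ⟨Ψ, hΨr, hΨ⟩ := exists_forall_tendsto_apply_of_norm_le U
    (φ := fun a => inclusionInDoubleDual ℝ X (x a)) fun a => (double_dual_bound ℝ X _).trans (hx a)
  obtain ⟨x', rfl⟩ := hrefl Ψ
  exact ⟨x', (inclusionInDoubleDualLi ℝ (E := X)).norm_map x' ▸ hΨr, hΨ⟩

theorem IsCompactOperator.tendsto_apply_of_forall_tendsto_dual {X Y : Type*}
    [NormedAddCommGroup X] [NormedSpace ℝ X] [NormedAddCommGroup Y] [NormedSpace ℝ Y]
    {K : X →L[ℝ] Y} (hK : IsCompactOperator K) (U : Ultrafilter α) {x : α → X} {r : ℝ}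
    (hx : ∀ a, ‖x a‖ ≤ r) {x' : X}
    (hweak : ∀ φ : StrongDual ℝ X, Tendsto (fun a => φ (x a)) U (𝓝 (φ x'))) :
    Tendsto (fun a => K (x a)) U (𝓝 (K x')) := by
  have hcpt : IsCompact (closure (K '' Metric.closedBall 0 r)) :=
    (show IsCompactOperator (K : X →ₗ[ℝ] Y) from hK).isCompact_closure_image_closedBall r
  obtain ⟨y, -, hy⟩ := hcpt.ultrafilter_le_nhds (U.map fun a => K (x a))
    (le_principal_iff.mpr (Ultrafilter.mem_map.mpr (univ_mem' fun a =>
      subset_closure ⟨x a, mem_closedBall_zero_iff.mpr (hx a), rfl⟩)))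
  suffices y = K x' from this ▸ hy
  refine (SeparatingDual.eq_iff_forall_dual_eq (R := ℝ)).mpr fun g => ?_
  exact tendsto_nhds_unique ((g.continuous.tendsto y).comp hy) (hweak (g.comp K))

theorem tendsto_apply_of_forall_tendsto {E : Type*} [SeminormedAddCommGroup E]
    [NormedSpace ℝ E] {l : Filter α} {φ : α → StrongDual ℝ E} {ψ : StrongDual ℝ E} {r : ℝ}
    (hφ : ∀ a, ‖φ a‖ ≤ r) (hweak : ∀ v, Tendsto (fun a => φ a v) l (𝓝 (ψ v)))
    {v : α → E} {v' : E} (hv : Tendsto v l (𝓝 v')) :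
    Tendsto (fun a => φ a (v a)) l (𝓝 (ψ v')) := by
  have hsmall : Tendsto (fun a => φ a (v a - v')) l (𝓝 0) := by
    refine squeeze_zero_norm (fun a => ((φ a).le_opNorm _).trans
      (mul_le_mul_of_nonneg_right (hφ a) (norm_nonneg _))) ?_
    simpa using tendsto_const_nhds.mul (hv.sub_const v').norm
  simpa using (hweak v').add hsmall

end WeakLimits

section Operators

variable {X Y : Type*} [NormedAddCommGroup X] [NormedSpace ℝ X] [NormedAddCommGroup Y]
  [NormedSpace ℝ Y]

noncomputable def evalFunctional (x : X) (h : StrongDual ℝ Y) : StrongDual ℝ (X →L[ℝ] Y) :=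
  h.comp (ContinuousLinearMap.apply ℝ Y x)

@[simp]
theorem evalFunctional_apply (x : X) (h : StrongDual ℝ Y) (S : X →L[ℝ] Y) :
    evalFunctional x h S = h (S x) :=
  rfl

theorem evalFunctional_neg_left (x : X) (h : StrongDual ℝ Y) :
    evalFunctional (-x) h = evalFunctional x (-h) := by
  ext S
  simp

theorem norm_evalFunctional_le (x : X) (h : StrongDual ℝ Y) :
    ‖evalFunctional x h‖ ≤ ‖h‖ * ‖x‖ := by
  refine ContinuousLinearMap.opNorm_le_bound _ (by positivity) fun S => ?_
  calc ‖h (S x)‖ ≤ ‖h‖ * (‖S‖ * ‖x‖) := h.le_opNorm_of_le (S.le_opNorm x)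
    _ = ‖h‖ * ‖x‖ * ‖S‖ := by ring

theorem norm_evalFunctional_le_one {x : X} {h : StrongDual ℝ Y} (hx : ‖x‖ ≤ 1) (hh : ‖h‖ ≤ 1) :
    ‖evalFunctional x h‖ ≤ 1 :=
  (norm_evalFunctional_le x h).trans (mul_le_one₀ hh (norm_nonneg x) hx)

theorem exists_evalFunctional_apply_gt (S : X →L[ℝ] Y) {ε : ℝ} (hε : 0 < ε) :
    ∃ (x : X) (h : StrongDual ℝ Y), ‖x‖ ≤ 1 ∧ ‖h‖ ≤ 1 ∧ ‖S‖ - ε < evalFunctional x h S := by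
  obtain ⟨x, hx, hSx⟩ := S.exists_lt_apply_of_lt_opNorm (sub_lt_self ‖S‖ hε)
  obtain ⟨h, hh, hhSx⟩ := exists_dual_vector'' ℝ (S x)
  exact ⟨x, h, hx.le, hh, by simpa [hhSx] using hSx⟩

theorem exists_tendsto_evalFunctional {α : Type*}
    (hrefl : Function.Surjective (inclusionInDoubleDual ℝ X)) (U : Ultrafilter α)
    {x : α → X} {h : α → StrongDual ℝ Y} (hx : ∀ a, ‖x a‖ ≤ 1) (hh : ∀ a, ‖h a‖ ≤ 1) :
    ∃ (x' : X) (h' : StrongDual ℝ Y) (F : StrongDual ℝ (X →L[ℝ] Y)),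
      ‖x'‖ ≤ 1 ∧ ‖h'‖ ≤ 1 ∧ ‖F‖ ≤ 1 ∧
      (∀ S, Tendsto (fun a => evalFunctional (x a) (h a) S) U (𝓝 (F S))) ∧
      ∀ K : X →L[ℝ] Y, IsCompactOperator K → F K = evalFunctional x' h' K := by
  obtain ⟨x', hx', hxlim⟩ := exists_forall_tendsto_dual_apply hrefl U hx
  obtain ⟨h', hh', hhlim⟩ := exists_forall_tendsto_apply_of_norm_le U hh
  obtain ⟨F, hF, hFlim⟩ := exists_forall_tendsto_apply_of_norm_le U
    (φ := fun a => evalFunctional (x a) (h a)) fun a => norm_evalFunctional_le_one (hx a) (hh a)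
  refine ⟨x', h', F, hx', hh', hF, hFlim, fun K hK => tendsto_nhds_unique (hFlim K) ?_⟩
  exact tendsto_apply_of_forall_tendsto hh hhlim
    (hK.tendsto_apply_of_forall_tendsto_dual U hx hxlim)

theorem exists_limit_evalFunctional_ge
    (hrefl : Function.Surjective (inclusionInDoubleDual ℝ X)) (T C : X →L[ℝ] Y)
    {f : StrongDual ℝ (X →L[ℝ] Y)} (hf : ‖f‖ ≤ 1) (hfT : f T = ‖T‖) :
    ∃ (x : X) (h : StrongDual ℝ Y) (F : StrongDual ℝ (X →L[ℝ] Y)),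
      ‖x‖ ≤ 1 ∧ ‖h‖ ≤ 1 ∧ ‖F‖ ≤ 1 ∧ ‖T‖ ≤ F T ∧ f C ≤ F C ∧
      ∀ K : X →L[ℝ] Y, IsCompactOperator K → F K = evalFunctional x h K := by
  set t : ℕ → ℝ := fun n => 1 / (n + 1)
  have ht : ∀ n, 0 < t n := fun n => Nat.one_div_pos_of_nat
  have ht0 : Tendsto t (hyperfilter ℕ) (𝓝 0) :=
    tendsto_one_div_add_atTop_nhds_zero_nat.mono_left Nat.hyperfilter_le_atTop
  choose x h hx hh hgt using fun n =>
    exists_evalFunctional_apply_gt (T + t n • C) (pow_pos (ht n) 2)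
  obtain ⟨x', h', F, hx', hh', hF, hlim, hK⟩ :=
    exists_tendsto_evalFunctional hrefl (hyperfilter ℕ) hx hh
  set φ := fun n => evalFunctional (x n) (h n)
  -- `f (T + t C) ≤ ‖T + t C‖ < φ (T + t C) + t²` with `f T = ‖T‖`
  have hkey : ∀ n, ‖T‖ + t n * (f C - φ n C - t n) < φ n T := by
    intro n
    have hf_le := StrongDual.apply_le_norm hf (T + t n • C)
    have h_gt := hgt n
    simp only [map_add, map_smul, smul_eq_mul, hfT] at hf_le h_gt
    nlinarith
  have hdir : ∀ n, f C ≤ φ n C + t n := by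
    intro n
    have hφT := StrongDual.apply_le_norm (norm_evalFunctional_le_one (hx n) (hh n)) T
    have hneg : t n * (f C - φ n C - t n) < 0 := by linarith [hkey n]
    nlinarith [ht n]
  refine ⟨x', h', F, hx', hh', hF, ?_, ?_, hK⟩
  · refine le_of_tendsto_of_tendsto' ?_ (hlim T) fun n => (hkey n).le
    simpa [φ] using tendsto_const_nhds.add (ht0.mul ((tendsto_const_nhds.sub (hlim C)).sub ht0))
  · simpa using le_of_tendsto_of_tendsto' tendsto_const_nhds ((hlim C).add ht0) hdir

end Operators

section Smoothness

variable {X Y : Type*} [NormedAddCommGroup X] [NormedSpace ℝ X] [NormedAddCommGroup Y]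
  [NormedSpace ℝ Y]

theorem norm_eq_one_of_apply_apply_eq_opNorm {T : X →L[ℝ] Y} (hT : T ≠ 0) {x : X}
    {h : StrongDual ℝ Y} (hx : ‖x‖ ≤ 1) (hh : ‖h‖ ≤ 1) (hTx : h (T x) = ‖T‖) :
    (‖x‖ = 1 ∧ ‖T x‖ = ‖T‖) ∧ ‖h‖ = 1 := by
  have hpos : 0 < ‖T‖ := norm_pos_iff.mpr hT
  have h₁ : ‖T‖ ≤ ‖h‖ * ‖T x‖ := hTx ▸ h.apply_le_norm_mul_norm (T x)
  have h₂ : ‖T x‖ ≤ ‖T‖ * ‖x‖ := T.le_opNorm x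
  have h₃ : ‖T x‖ ≤ ‖T‖ := h₂.trans (mul_le_of_le_one_right hpos.le hx)
  have h₄ : ‖T‖ ≤ ‖T x‖ := h₁.trans (mul_le_of_le_one_left (norm_nonneg _) hh)
  have h₅ : ‖T‖ ≤ ‖h‖ * ‖T‖ := h₁.trans (mul_le_mul_of_nonneg_left h₃ (norm_nonneg h))
  refine ⟨⟨?_, h₃.antisymm h₄⟩, ?_⟩ <;> nlinarith

theorem evalFunctional_eq_of_apply_apply_eq_opNorm {T : X →L[ℝ] Y} (hT : T ≠ 0) {x₀ : X}
    (hM : {x : X | ‖x‖ = 1 ∧ ‖T x‖ = ‖T‖} = {x₀, -x₀}) {g : StrongDual ℝ Y}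
    (hg : ∀ g' : StrongDual ℝ Y, ‖g'‖ = 1 ∧ g' (T x₀) = ‖T x₀‖ → g' = g) {x : X}
    {h : StrongDual ℝ Y} (hx : ‖x‖ ≤ 1) (hh : ‖h‖ ≤ 1) (hTx : h (T x) = ‖T‖) :
    evalFunctional x h = evalFunctional x₀ g := by
  obtain ⟨hxM, hh₁⟩ := norm_eq_one_of_apply_apply_eq_opNorm hT hx hh hTx
  have hx₀ : x₀ ∈ {x : X | ‖x‖ = 1 ∧ ‖T x‖ = ‖T‖} := hM ▸ Set.mem_insert x₀ {-x₀}
  have hTx₀ : ‖T x₀‖ = ‖T‖ := hx₀.2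
  obtain rfl | rfl : x ∈ ({x₀, -x₀} : Set X) := hM ▸ hxM
  · rw [hg h ⟨hh₁, by rw [hTx, hTx₀]⟩]
  · rw [evalFunctional_neg_left, hg (-h) ⟨by rwa [norm_neg], by simpa [hTx₀] using hTx⟩]

theorem apply_le_evalFunctional
    (hrefl : Function.Surjective (inclusionInDoubleDual ℝ X))
    {P : StrongDual ℝ (X →L[ℝ] Y) →L[ℝ] StrongDual ℝ (X →L[ℝ] Y)}
    (hP : IsMIdealProjection (compactOperator (RingHom.id ℝ) X Y) P) {T : X →L[ℝ] Y}
    (hdist : Metric.infDist T {K : X →L[ℝ] Y | IsCompactOperator K} < ‖T‖) {x₀ : X}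
    (hM : {x : X | ‖x‖ = 1 ∧ ‖T x‖ = ‖T‖} = {x₀, -x₀}) {g : StrongDual ℝ Y}
    (hg : ∀ g' : StrongDual ℝ Y, ‖g'‖ = 1 ∧ g' (T x₀) = ‖T x₀‖ → g' = g)
    {f : StrongDual ℝ (X →L[ℝ] Y)} (hf : ‖f‖ ≤ 1) (hfT : f T = ‖T‖) (C : X →L[ℝ] Y) :
    f C ≤ evalFunctional x₀ g C := by
  have hT : T ≠ 0 := norm_pos_iff.mp (Metric.infDist_nonneg.trans_lt hdist)
  obtain ⟨x, h, F, hx, hh, hF, hFT, hfF, hFK⟩ := exists_limit_evalFunctional_ge hrefl T C hf hfT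
  have hFT' : F T = ‖T‖ := (StrongDual.apply_le_norm hF T).antisymm hFT
  have hF₁ : ‖F‖ = 1 := StrongDual.norm_eq_one_of_apply_eq_norm hF (norm_ne_zero_iff.mpr hT) hFT'
  have hFeq : F = evalFunctional x h :=
    hP.eq_of_eqOn_of_norm_le (hP.map_eq_zero_of_apply_eq_norm hdist hF hFT') hFK
      (hF₁ ▸ norm_evalFunctional_le_one hx hh)
  have hTx : h (T x) = ‖T‖ := by rw [← evalFunctional_apply, ← hFeq, hFT']
  rw [← evalFunctional_eq_of_apply_apply_eq_opNorm hT hM hg hx hh hTx, ← hFeq]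
  exact hfF

end Smoothness

theorem smooth_sufficient_conditions_general
    {X Y : Type*} [NormedAddCommGroup X] [NormedSpace ℝ X]
    [NormedAddCommGroup Y] [NormedSpace ℝ Y]
    (hrefl : Function.Surjective (NormedSpace.inclusionInDoubleDual ℝ X))
    (P : StrongDual ℝ (X →L[ℝ] Y) →L[ℝ] StrongDual ℝ (X →L[ℝ] Y))
    (hPidem : ∀ f, P (P f) = P f)
    (hPL : ∀ f, ‖f‖ = ‖P f‖ + ‖f - P f‖)
    (hPrange : Set.range ⇑P =
      {f : StrongDual ℝ (X →L[ℝ] Y) | ∀ K : X →L[ℝ] Y, IsCompactOperator ⇑K → f K = 0})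
    (T : X →L[ℝ] Y) (x₀ : X)
    (hMT : {x : X | ‖x‖ = 1 ∧ ‖T x‖ = ‖T‖} = {x₀, -x₀})
    (hsmoothY : ∃! g : StrongDual ℝ Y, ‖g‖ = 1 ∧ g (T x₀) = ‖T x₀‖)
    (hdist : Metric.infDist T {K : X →L[ℝ] Y | IsCompactOperator ⇑K} < ‖T‖) :
    ∃! f : StrongDual ℝ (X →L[ℝ] Y), ‖f‖ = 1 ∧ f T = ‖T‖ := by
  obtain ⟨g, ⟨hg₁, hgT⟩, hg⟩ := hsmoothY
  have hP : IsMIdealProjection (compactOperator (RingHom.id ℝ) X Y) P := ⟨hPidem, hPL, hPrange⟩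
  have hT : T ≠ 0 := norm_pos_iff.mp (Metric.infDist_nonneg.trans_lt hdist)
  have hx₀ : x₀ ∈ {x : X | ‖x‖ = 1 ∧ ‖T x‖ = ‖T‖} := hMT ▸ Set.mem_insert x₀ {-x₀}
  have hψ : ‖evalFunctional x₀ g‖ ≤ 1 := norm_evalFunctional_le_one hx₀.1.le hg₁.le
  have hψT : evalFunctional x₀ g T = ‖T‖ := by rw [evalFunctional_apply, hgT, hx₀.2]
  refine ⟨evalFunctional x₀ g, ⟨StrongDual.norm_eq_one_of_apply_eq_norm hψ
    (norm_ne_zero_iff.mpr hT) hψT, hψT⟩, fun f ⟨hf₁, hfT⟩ => ?_⟩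
  have hle := apply_le_evalFunctional hrefl hP hdist hMT hg hf₁.le hfT
  ext C
  refine (hle C).antisymm ?_
  simpa using hle (-C)

/-- **Theorem 12 (sufficient conditions for smoothness).** Let `X` be a real
reflexive Banach space and `Y` a real Banach space, both of dimension ≥ 2, with
`K(X,Y)` an M-ideal in `L(X,Y)`. If `T ∈ L(X,Y)` satisfies (i) `M_T = {x₀, -x₀}`
for a unit vector `x₀`, (ii) `Tx₀` is a smooth point of `Y`, and
(iii) `dist(T, K(X,Y)) < ‖T‖`, then `T` is a smooth point of `L(X,Y)`. -/
theorem smooth_sufficient_conditions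
    {X Y : Type*} [NormedAddCommGroup X] [NormedSpace ℝ X] [CompleteSpace X]
    [NormedAddCommGroup Y] [NormedSpace ℝ Y] [CompleteSpace Y]
    (hrefl : Function.Surjective (NormedSpace.inclusionInDoubleDual ℝ X))
    (hdimX : 2 ≤ Module.rank ℝ X) (hdimY : 2 ≤ Module.rank ℝ Y)
    (P : StrongDual ℝ (X →L[ℝ] Y) →L[ℝ] StrongDual ℝ (X →L[ℝ] Y))
    (hPidem : ∀ f, P (P f) = P f)
    (hPL : ∀ f, ‖f‖ = ‖P f‖ + ‖f - P f‖)
    (hPrange : Set.range ⇑P =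
      {f : StrongDual ℝ (X →L[ℝ] Y) | ∀ K : X →L[ℝ] Y, IsCompactOperator ⇑K → f K = 0})
    (T : X →L[ℝ] Y) (x₀ : X) (hx₀ : ‖x₀‖ = 1)
    (hMT : {x : X | ‖x‖ = 1 ∧ ‖T x‖ = ‖T‖} = {x₀, -x₀})
    (hsmoothY : ∃! g : StrongDual ℝ Y, ‖g‖ = 1 ∧ g (T x₀) = ‖T x₀‖)
    (hdist : Metric.infDist T {K : X →L[ℝ] Y | IsCompactOperator ⇑K} < ‖T‖) :
    ∃! f : StrongDual ℝ (X →L[ℝ] Y), ‖f‖ = 1 ∧ f T = ‖T‖ :=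
  smooth_sufficient_conditions_general hrefl P hPidem hPL hPrange T x₀ hMT hsmoothY hdist
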